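/- For any linkage L and any (C,A) ∈ IGConf₀(L), the annotation A is well-annotated: for distinct edges e_i and e_j, if the segments C(e_i) and C(e_j) overlap over a segment of length l > 0 then A_{ij} = l or A_{ij} = −l, and if they do not overlap over a segment of positive length then A_{ij} = Ord(C(e_i), C(e_j)). -/

import Mathlib

open MeasureTheory Filter Topology Set

noncomputable section
open scoped Classical

abbrev Pt : Type := EuclideanSpace ℝ (Fin 2)

/-- The point with coordinates `(a, b)` in the plane. -/
def pt (a b : ℝ) : Pt := WithLp.toLp 2 ![a, b]

/-- `d₊(e₁,e₂)` where `e₁` is the oriented segment from `p` to `q` and `e₂` the segment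
from `r` to `s`: the Lebesgue measure of the set of `x ∈ [0, ‖q-p‖]` such that some point
of `e₂` has coordinates `(x, y)` with `y ≥ 0` in the frame centered at `p` with the
`x`-axis directed along `e₁`. It is `0` if `e₁` is degenerate. -/
def dplus (p q r s : Pt) : ℝ :=
  if p = q then 0 else
    (volume {x : ℝ | x ∈ Set.Icc (0 : ℝ) (dist p q) ∧
        ∃ y : ℝ, 0 ≤ y ∧
          p + x • (‖q - p‖⁻¹ • (q - p)) +
              y • pt (-(‖q - p‖⁻¹ • (q - p)) 1) ((‖q - p‖⁻¹ • (q - p)) 0)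
            ∈ segment ℝ r s}).toReal

/-- As `dplus`, but for points below the axis (`y ≤ 0`). -/
def dminus (p q r s : Pt) : ℝ :=
  if p = q then 0 else
    (volume {x : ℝ | x ∈ Set.Icc (0 : ℝ) (dist p q) ∧
        ∃ y : ℝ, y ≤ 0 ∧
          p + x • (‖q - p‖⁻¹ • (q - p)) +
              y • pt (-(‖q - p‖⁻¹ • (q - p)) 1) ((‖q - p‖⁻¹ • (q - p)) 0)
            ∈ segment ℝ r s}).toReal

/-- The order function `Ord(e₁,e₂) = d₊(e₁,e₂) − d₋(e₁,e₂)`. -/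
def ordFn (p q r s : Pt) : ℝ := dplus p q r s - dminus p q r s

/-- A linkage: a finite graph given by an edge-index type `E` with endpoint maps
`fst, snd : E → V` (this also fixes an orientation of each edge), together with a
nonnegative length for each edge (bar). -/
structure Linkage (V E : Type) where
  fst : E → V
  snd : E → V
  len : E → ℝ
  len_nonneg : ∀ e, 0 ≤ len e

variable {V E : Type}

/-- The set `Conf₀(L)` of configurations of a linkage: maps `C : V → ℝ²` realizing
every edge length exactly. -/
def ConfSet (L : Linkage V E) : Set (V → Pt) :=
  {C | ∀ e : E, dist (C (L.fst e)) (C (L.snd e)) = L.len e}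

/-- Configurations of linkages `ε`-related to `L`: each bar length is realized within
`ε` of its length in `L`. -/
def ConfRel (L : Linkage V E) (ε : ℝ) : Set (V → Pt) :=
  {C | ∀ e : E, |dist (C (L.fst e)) (C (L.snd e)) - L.len e| ≤ ε}

/-- The closed segment (bar) assigned to edge `e` by the configuration `C`. -/
def Seg (L : Linkage V E) (C : V → Pt) (e : E) : Set Pt :=
  segment ℝ (C (L.fst e)) (C (L.snd e))

/-- Two vertices are joined by a path of zero-length bars (bars whose endpoints coincide
under the configuration `C`). -/
def ZeroJoined (L : Linkage V E) (C : V → Pt) : V → V → Prop :=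
  Relation.ReflTransGen fun u v =>
    (∃ e : E, (L.fst e = u ∧ L.snd e = v) ∨ (L.fst e = v ∧ L.snd e = u)) ∧ C u = C v

/-- A configuration is nontouching if no two bars intersect except at shared endpoints,
and two vertices are mapped to the same point if and only if they are joined by a path of
zero-length bars. -/
def Nontouching (L : Linkage V E) (C : V → Pt) : Prop :=
  (∀ u v : V, C u = C v ↔ ZeroJoined L C u v) ∧
  (∀ e f : E, e ≠ f → ∀ z ∈ Seg L C e ∩ Seg L C f,
    (∃ u : V, (L.fst e = u ∨ L.snd e = u) ∧ C u = z) ∧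
    (∃ v : V, (L.fst f = v ∨ L.snd f = v) ∧ C v = z))

/-- `NConf_ε(L)`: the nontouching configurations of linkages `ε`-related to `L`. -/
def NConf (L : Linkage V E) (ε : ℝ) : Set (V → Pt) :=
  {C | C ∈ ConfRel L ε ∧ Nontouching L C}

/-- The annotation function `Annot_L`, sending a map `C : V → ℝ²` to the pair `(C, A)`
where `A i j = Ord(C(eᵢ), C(eⱼ))`. -/
def Annot (L : Linkage V E) (C : V → Pt) : (V → Pt) × (E → E → ℝ) :=
  (C, fun i j => ordFn (C (L.fst i)) (C (L.snd i)) (C (L.fst j)) (C (L.snd j)))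

/-- The space `IGConf₀(L)` of noncrossing configurations of `L`:
`(Conf₀(L) × ℝ^{E×E}) ∩ closure (Annot_L(NConf₁(L)))`. -/
def IGConf (L : Linkage V E) : Set ((V → Pt) × (E → E → ℝ)) :=
  (ConfSet L ×ˢ (Set.univ : Set (E → E → ℝ))) ∩ closure (Annot L '' NConf L 1)

/-- Two subsets of the plane overlap over a segment of length `d` if their intersection is
a segment of length `d`. -/
def OverlapLen (s t : Set Pt) (d : ℝ) : Prop :=
  ∃ u v : Pt, s ∩ t = segment ℝ u v ∧ dist u v = d


/-! In the frame of the bar `C(eᵢ)`, if `C(eⱼ)` meets `C(eᵢ)` at most in the endpoints of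
`C(eᵢ)`, it cannot have points strictly on both sides of `C(eᵢ)` over its interior, so the
order function is `±` the length of the shadow of `C(eⱼ)` on `C(eᵢ)`. The shadow length is
continuous, so a limit `A i j` of annotations is `±` the limit shadow length, which is the
overlap length when there is an overlap. Without an overlap, a point of `C(eⱼ)` strictly on one
side of `C(eᵢ)` persists along the approximating configurations and fixes the sign; if there is
no such point the shadow length vanishes. A degenerate bar `C(eᵢ)` has order function bounded by
its length, hence `A i j = 0`. -/

open scoped RealInnerProductSpace

theorem AffineMap.eq_zero_of_eq_zero_of_mem_segment {E : Type*} [AddCommGroup E] [Module ℝ E]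
    (f : E →ᵃ[ℝ] ℝ) {r s z₁ z₂ : E} (h₁ : z₁ ∈ segment ℝ r s) (h₂ : z₂ ∈ segment ℝ r s)
    (hne : z₁ ≠ z₂) (hf₁ : f z₁ = 0) (hf₂ : f z₂ = 0) : f r = 0 ∧ f s = 0 := by
  rw [segment_eq_image_lineMap] at h₁ h₂
  obtain ⟨t₁, -, rfl⟩ := h₁
  obtain ⟨t₂, -, rfl⟩ := h₂
  rw [AffineMap.apply_lineMap, AffineMap.lineMap_apply_ring'] at hf₁ hf₂
  have ht : t₁ - t₂ ≠ 0 := sub_ne_zero.2 fun h => hne (by rw [h])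
  have hsr : f s - f r = 0 :=
    (mul_eq_zero.1 (by linear_combination hf₁ - hf₂ : (t₁ - t₂) * (f s - f r) = 0)).resolve_left ht
  exact ⟨by linear_combination hf₁ - t₁ * hsr, by linear_combination hf₁ + (1 - t₁) * hsr⟩

section Frame

variable {p q r s z : Pt}

lemma inner_eq_coords (x y : Pt) : ⟪x, y⟫ = x 0 * y 0 + x 1 * y 1 := by
  simp [PiLp.inner_apply, Fin.sum_univ_two, mul_comm]

def coordAlong (p w : Pt) : Pt →ᵃ[ℝ] ℝ where
  toFun z := ⟪w, z - p⟫
  linear := innerₛₗ ℝ w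
  map_vadd' z v := by simp [vadd_eq_add, add_sub_assoc, inner_add_right]

def unitDir (p q : Pt) : Pt := ‖q - p‖⁻¹ • (q - p)

def unitNormal (p q : Pt) : Pt := pt (-unitDir p q 1) (unitDir p q 0)

def frameX (p q : Pt) : Pt →ᵃ[ℝ] ℝ := coordAlong p (unitDir p q)

def frameY (p q : Pt) : Pt →ᵃ[ℝ] ℝ := coordAlong p (unitNormal p q)

lemma frameX_apply (p q z : Pt) : frameX p q z = ⟪unitDir p q, z - p⟫ := rfl

lemma frameY_apply (p q z : Pt) : frameY p q z = ⟪unitNormal p q, z - p⟫ := rfl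

lemma norm_unitDir (hpq : p ≠ q) : ‖unitDir p q‖ = 1 :=
  norm_smul_inv_norm (sub_ne_zero.2 hpq.symm)

lemma unitDir_sq_add_sq (hpq : p ≠ q) : unitDir p q 0 ^ 2 + unitDir p q 1 ^ 2 = 1 := by
  have h := real_inner_self_eq_norm_sq (unitDir p q)
  rw [norm_unitDir hpq, inner_eq_coords] at h
  linear_combination h

lemma frame_decomp (hpq : p ≠ q) (z : Pt) :
    p + frameX p q z • unitDir p q + frameY p q z • unitNormal p q = z := by
  have h := unitDir_sq_add_sq hpq
  rw [frameX_apply, frameY_apply, inner_eq_coords, inner_eq_coords]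
  ext i
  fin_cases i
  · simp [unitNormal, pt]
    linear_combination (z 0 - p 0) * h
  · simp [unitNormal, pt]
    linear_combination (z 1 - p 1) * h

lemma frameX_frame (hpq : p ≠ q) (x y : ℝ) :
    frameX p q (p + x • unitDir p q + y • unitNormal p q) = x := by
  have h := unitDir_sq_add_sq hpq
  rw [frameX_apply, inner_eq_coords]
  simp [unitNormal, pt]
  linear_combination x * h

lemma frameY_frame (hpq : p ≠ q) (x y : ℝ) :
    frameY p q (p + x • unitDir p q + y • unitNormal p q) = y := by
  have h := unitDir_sq_add_sq hpq
  rw [frameY_apply, inner_eq_coords]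
  simp [unitNormal, pt]
  linear_combination y * h

def lineParam (p q : Pt) : ℝ →ᵃ[ℝ] Pt := AffineMap.lineMap p (p + unitDir p q)

lemma lineParam_apply (p q : Pt) (x : ℝ) : lineParam p q x = p + x • unitDir p q := by
  simp [lineParam, AffineMap.lineMap_apply, add_comm]

lemma frameX_lineParam (hpq : p ≠ q) (x : ℝ) : frameX p q (lineParam p q x) = x := by
  simpa [lineParam_apply] using frameX_frame hpq x 0

lemma frameY_lineParam (hpq : p ≠ q) (x : ℝ) : frameY p q (lineParam p q x) = 0 := by
  simpa [lineParam_apply] using frameY_frame hpq x 0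

lemma lineParam_frameX (hpq : p ≠ q) (hz : frameY p q z = 0) :
    lineParam p q (frameX p q z) = z := by
  simpa [lineParam_apply, hz] using frame_decomp hpq z

lemma isometry_lineParam (hpq : p ≠ q) : Isometry (lineParam p q) :=
  Isometry.of_dist_eq fun x x' => by
    rw [lineParam_apply, lineParam_apply, dist_eq_norm, add_sub_add_left_eq_sub, ← sub_smul,
      norm_smul, norm_unitDir hpq, mul_one, Real.dist_eq, Real.norm_eq_abs]

lemma mem_image_lineParam_iff (hpq : p ≠ q) {I : Set ℝ} :
    z ∈ lineParam p q '' I ↔ frameY p q z = 0 ∧ frameX p q z ∈ I := by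
  constructor
  · rintro ⟨x, hx, rfl⟩
    exact ⟨frameY_lineParam hpq x, by rwa [frameX_lineParam hpq]⟩
  · rintro ⟨hY, hX⟩
    exact ⟨_, hX, lineParam_frameX hpq hY⟩

lemma lineParam_zero (p q : Pt) : lineParam p q 0 = p := AffineMap.lineMap_apply_zero _ _

lemma lineParam_dist (hpq : p ≠ q) : lineParam p q (dist p q) = q := by
  rw [lineParam_apply, unitDir, smul_smul, ← dist_eq_norm', mul_inv_cancel₀ (dist_ne_zero.2 hpq),
    one_smul, add_sub_cancel]

lemma segment_eq_image_lineParam (hpq : p ≠ q) :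
    segment ℝ p q = lineParam p q '' Icc 0 (dist p q) := by
  rw [← segment_eq_Icc dist_nonneg, image_segment, lineParam_zero, lineParam_dist hpq]

lemma openSegment_eq_image_lineParam (hpq : p ≠ q) :
    openSegment ℝ p q = lineParam p q '' Ioo 0 (dist p q) := by
  rw [← openSegment_eq_Ioo (dist_pos.2 hpq), image_openSegment, lineParam_zero,
    lineParam_dist hpq]

lemma segment_eq_image_lineParam_of_frameY (hpq : p ≠ q) (hr : frameY p q r = 0)
    (hs : frameY p q s = 0) :
    segment ℝ r s = lineParam p q '' uIcc (frameX p q r) (frameX p q s) := by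
  rw [← segment_eq_uIcc, image_segment, lineParam_frameX hpq hr, lineParam_frameX hpq hs]

lemma segment_inter_eq_image_lineParam (hpq : p ≠ q) (hr : frameY p q r = 0)
    (hs : frameY p q s = 0) :
    segment ℝ p q ∩ segment ℝ r s
      = lineParam p q '' (Icc 0 (dist p q) ∩ uIcc (frameX p q r) (frameX p q s)) := by
  rw [segment_eq_image_lineParam hpq, segment_eq_image_lineParam_of_frameY hpq hr hs,
    image_inter (isometry_lineParam hpq).injective]

lemma image_frameX_segment (p q r s : Pt) :
    frameX p q '' segment ℝ r s = uIcc (frameX p q r) (frameX p q s) := by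
  rw [image_segment, segment_eq_uIcc]

end Frame

section Shadow

variable {p q r s : Pt}

def shadowLen (a b l : ℝ) : ℝ := max (min l (max a b) - max 0 (min a b)) 0

lemma shadowLen_eq_volume (a b l : ℝ) :
    shadowLen a b l = (volume (Icc 0 l ∩ uIcc a b)).toReal := by
  rw [uIcc, Icc_inter_Icc, Real.volume_Icc, ENNReal.toReal_ofReal']
  rfl

def shadow (p q r s : Pt) (T : Set ℝ) : Set ℝ :=
  {x | x ∈ Icc 0 (dist p q) ∧ ∃ z ∈ segment ℝ r s, frameY p q z ∈ T ∧ frameX p q z = x}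

lemma shadow_union (T T' : Set ℝ) :
    shadow p q r s (T ∪ T') = shadow p q r s T ∪ shadow p q r s T' := by
  ext x
  simp only [shadow, mem_ofPred_eq, mem_union]
  grind

lemma shadow_univ (p q r s : Pt) :
    shadow p q r s univ = Icc 0 (dist p q) ∩ uIcc (frameX p q r) (frameX p q s) := by
  ext x
  simp only [shadow, mem_inter_iff, ← image_frameX_segment, mem_image, mem_univ, true_and]
  rfl

lemma setOf_frame_mem_segment_eq_shadow (hpq : p ≠ q) (T : Set ℝ) :
    {x | x ∈ Icc 0 (dist p q) ∧
      ∃ y ∈ T, p + x • unitDir p q + y • unitNormal p q ∈ segment ℝ r s} = shadow p q r s T := by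
  ext x
  refine and_congr_right fun _ => ⟨?_, ?_⟩
  · rintro ⟨y, hy, hz⟩
    exact ⟨_, hz, by rwa [frameY_frame hpq], frameX_frame hpq x y⟩
  · rintro ⟨z, hz, hY, rfl⟩
    exact ⟨_, hY, by rwa [frame_decomp hpq]⟩

lemma ordFn_eq_volume_shadow (hpq : p ≠ q) :
    ordFn p q r s
      = (volume (shadow p q r s (Ici 0))).toReal - (volume (shadow p q r s (Iic 0))).toReal := by
  rw [ordFn, dplus, dminus, if_neg hpq, if_neg hpq, ← setOf_frame_mem_segment_eq_shadow hpq,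
    ← setOf_frame_mem_segment_eq_shadow hpq]
  rfl

lemma abs_ordFn_le (p q r s : Pt) : |ordFn p q r s| ≤ dist p q := by
  rcases eq_or_ne p q with rfl | hpq
  · simp [ordFn, dplus, dminus]
  have key : ∀ T : Set ℝ, T ⊆ Icc 0 (dist p q) → 0 ≤ (volume T).toReal ∧
      (volume T).toReal ≤ dist p q := fun T hT => ⟨ENNReal.toReal_nonneg, by
    simpa [Real.volume_Icc] using
      ENNReal.toReal_mono (by simp [Real.volume_Icc]) (measure_mono (μ := volume) hT)⟩
  obtain ⟨h₁, h₂⟩ := key (shadow p q r s (Ici 0)) fun x hx => hx.1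
  obtain ⟨h₃, h₄⟩ := key (shadow p q r s (Iic 0)) fun x hx => hx.1
  rw [ordFn_eq_volume_shadow hpq, abs_le]
  constructor <;> linarith

def StrictSide (p q r s : Pt) (σ : ℝ) : Prop :=
  ∃ z ∈ segment ℝ r s, frameX p q z ∈ Ioo 0 (dist p q) ∧ 0 < σ * frameY p q z

lemma volume_shadow_eq_zero (hZ : (openSegment ℝ p q ∩ segment ℝ r s).Subsingleton) {σ : ℝ}
    (hσ : σ ≠ 0) (h : ¬StrictSide p q r s σ) :
    volume (shadow p q r s {y | 0 ≤ σ * y}) = 0 := by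
  refine measure_mono_null
    (t := {0, dist p q} ∪ frameX p q '' (openSegment ℝ p q ∩ segment ℝ r s)) ?_
    (((toFinite _).union (hZ.image _).finite).measure_zero volume)
  rintro x ⟨hx, z, hz, hY, rfl⟩
  by_cases hX : frameX p q z ∈ Ioo 0 (dist p q)
  · have hpq : p ≠ q := dist_pos.1 (hX.1.trans hX.2)
    have hY0 : frameY p q z = 0 := by
      by_contra hY0
      exact h ⟨z, hz, hX, lt_of_le_of_ne hY (mul_ne_zero hσ hY0).symm⟩
    refine Or.inr ⟨z, ⟨?_, hz⟩, rfl⟩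
    rw [openSegment_eq_image_lineParam hpq, mem_image_lineParam_iff hpq]
    exact ⟨hY0, hX⟩
  · left
    rcases hx.1.eq_or_lt with h0 | h0
    · exact Or.inl h0.symm
    · exact Or.inr (hx.2.eq_or_lt.resolve_right fun hl => hX ⟨h0, hl⟩)

lemma ordFn_eq_sign_mul_shadowLen (hpq : p ≠ q) {σ : ℝ} (hσ : σ = 1 ∨ σ = -1)
    (hZ : (openSegment ℝ p q ∩ segment ℝ r s).Subsingleton) (h : ¬StrictSide p q r s (-σ)) :
    ordFn p q r s = σ * shadowLen (frameX p q r) (frameX p q s) (dist p q) := by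
  have hnull := volume_shadow_eq_zero hZ (by rcases hσ with rfl | rfl <;> norm_num) h
  have hfull : volume (shadow p q r s {y | 0 ≤ σ * y}) = volume (shadow p q r s univ) := by
    refine le_antisymm (measure_mono fun x ⟨hx, z, hz, _, hzx⟩ => ⟨hx, z, hz, trivial, hzx⟩) ?_
    calc volume (shadow p q r s univ)
        = volume (shadow p q r s ({y | 0 ≤ σ * y} ∪ {y | 0 ≤ -σ * y})) := by
          congr 2; ext y; simp only [mem_univ, mem_union, mem_ofPred_eq, true_iff, neg_mul]
          exact (le_total 0 (σ * y)).imp id neg_nonneg.2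
      _ ≤ volume (shadow p q r s {y | 0 ≤ σ * y}) := by
          rw [shadow_union]; exact (measure_union_le _ _).trans (by rw [hnull, add_zero])
  rw [ordFn_eq_volume_shadow hpq, shadowLen_eq_volume, ← shadow_univ, ← hfull]
  rcases hσ with rfl | rfl
  · rw [show Ici (0 : ℝ) = {y | 0 ≤ 1 * y} by ext; simp,
      show Iic (0 : ℝ) = {y | 0 ≤ -1 * y} by ext; simp, hnull]
    simp
  · rw [show Ici (0 : ℝ) = {y | 0 ≤ -(-1) * y} by ext; simp,
      show Iic (0 : ℝ) = {y | 0 ≤ -1 * y} by ext; simp, hnull]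
    simp

end Shadow

section Overlap

variable {p q r s : Pt}

lemma frameY_eq_zero_of_segment_inter (hpq : p ≠ q) {z₁ z₂ : Pt}
    (h₁ : z₁ ∈ segment ℝ p q ∩ segment ℝ r s) (h₂ : z₂ ∈ segment ℝ p q ∩ segment ℝ r s)
    (hne : z₁ ≠ z₂) : frameY p q r = 0 ∧ frameY p q s = 0 := by
  rw [segment_eq_image_lineParam hpq, mem_inter_iff, mem_image_lineParam_iff hpq] at h₁ h₂
  exact (frameY p q).eq_zero_of_eq_zero_of_mem_segment h₁.2 h₂.2 hne h₁.1.1 h₂.1.1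

lemma subsingleton_of_not_overlapLen (hpq : p ≠ q)
    (hno : ¬∃ l, 0 < l ∧ OverlapLen (segment ℝ p q) (segment ℝ r s) l) :
    (openSegment ℝ p q ∩ segment ℝ r s).Subsingleton := by
  intro z₁ h₁ z₂ h₂
  by_contra hne
  have hsub : openSegment ℝ p q ∩ segment ℝ r s ⊆ segment ℝ p q ∩ segment ℝ r s :=
    inter_subset_inter_left _ (openSegment_subset_segment ℝ p q)
  obtain ⟨hr, hs⟩ := frameY_eq_zero_of_segment_inter hpq (hsub h₁) (hsub h₂) hne
  have hI := segment_inter_eq_image_lineParam hpq hr hs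
  rw [uIcc, Icc_inter_Icc] at hI
  have hcd : max 0 (min (frameX p q r) (frameX p q s))
      ≤ min (dist p q) (max (frameX p q r) (frameX p q s)) := by
    obtain ⟨x, hx, -⟩ := hI ▸ hsub h₁
    exact hx.1.trans hx.2
  rw [← segment_eq_Icc hcd, image_segment] at hI
  refine hno ⟨_, dist_pos.2 fun huv => hne ?_, _, _, hI, rfl⟩
  rw [huv, segment_same] at hI
  exact (hI ▸ hsub h₁).trans (hI ▸ hsub h₂).symm

lemma shadowLen_eq_of_overlapLen (hpq : p ≠ q) {l : ℝ} (hl : 0 < l)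
    (hov : OverlapLen (segment ℝ p q) (segment ℝ r s) l) :
    shadowLen (frameX p q r) (frameX p q s) (dist p q) = l := by
  obtain ⟨u, v, huv, rfl⟩ := hov
  have hu : u ∈ segment ℝ p q ∩ segment ℝ r s := huv ▸ left_mem_segment ℝ u v
  have hv : v ∈ segment ℝ p q ∩ segment ℝ r s := huv ▸ right_mem_segment ℝ u v
  obtain ⟨hr, hs⟩ := frameY_eq_zero_of_segment_inter hpq hu hv (dist_pos.1 hl)
  have hYu : frameY p q u = 0 :=
    ((mem_image_lineParam_iff hpq).1 (segment_eq_image_lineParam hpq ▸ hu.1)).1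
  have hYv : frameY p q v = 0 :=
    ((mem_image_lineParam_iff hpq).1 (segment_eq_image_lineParam hpq ▸ hv.1)).1
  rw [segment_inter_eq_image_lineParam hpq hr hs,
    segment_eq_image_lineParam_of_frameY hpq hYu hYv] at huv
  rw [shadowLen_eq_volume, (isometry_lineParam hpq).injective.image_injective huv,
    Real.volume_interval, ENNReal.toReal_ofReal (abs_nonneg _), ← lineParam_frameX hpq hYu,
    ← lineParam_frameX hpq hYv, (isometry_lineParam hpq).dist_eq, Real.dist_eq, abs_sub_comm,
    frameX_lineParam hpq, frameX_lineParam hpq]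

lemma openSegment_inter_nonempty_of_frameY (hpq : p ≠ q) {z₁ z₂ : Pt}
    (h₁ : z₁ ∈ segment ℝ r s) (h₂ : z₂ ∈ segment ℝ r s)
    (hX₁ : frameX p q z₁ ∈ Ioo 0 (dist p q)) (hX₂ : frameX p q z₂ ∈ Ioo 0 (dist p q))
    (hY₁ : frameY p q z₁ ≤ 0) (hY₂ : 0 ≤ frameY p q z₂) :
    (openSegment ℝ p q ∩ segment ℝ r s).Nonempty := by
  obtain ⟨z, hz, hYz⟩ := (convex_segment z₁ z₂).isPreconnected.intermediate_value
    (left_mem_segment ℝ z₁ z₂) (right_mem_segment ℝ z₁ z₂)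
    (frameY p q).continuous_of_finiteDimensional.continuousOn ⟨hY₁, hY₂⟩
  have hXz : frameX p q z ∈ Ioo 0 (dist p q) :=
    ordConnected_Ioo.uIcc_subset hX₁ hX₂ (image_frameX_segment p q z₁ z₂ ▸ mem_image_of_mem _ hz)
  refine ⟨z, ?_, (convex_segment r s).segment_subset h₁ h₂ hz⟩
  rw [openSegment_eq_image_lineParam hpq, mem_image_lineParam_iff hpq]
  exact ⟨hYz, hXz⟩

lemma not_strictSide_and_neg (hpq : p ≠ q) {σ : ℝ} (hσ : σ = 1 ∨ σ = -1)
    (h : openSegment ℝ p q ∩ segment ℝ r s = ∅) :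
    ¬(StrictSide p q r s σ ∧ StrictSide p q r s (-σ)) := by
  rintro ⟨⟨z₁, h₁, hX₁, hY₁⟩, ⟨z₂, h₂, hX₂, hY₂⟩⟩
  rw [← not_nonempty_iff_eq_empty] at h
  rcases hσ with rfl | rfl
  · exact h (openSegment_inter_nonempty_of_frameY hpq h₂ h₁ hX₂ hX₁ (by linarith) (by linarith))
  · exact h (openSegment_inter_nonempty_of_frameY hpq h₁ h₂ hX₁ hX₂ (by linarith) (by linarith))

lemma ordFn_sq_eq_shadowLen_sq (hpq : p ≠ q) (h : openSegment ℝ p q ∩ segment ℝ r s = ∅) :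
    ordFn p q r s ^ 2 = shadowLen (frameX p q r) (frameX p q s) (dist p q) ^ 2 := by
  have hZ : (openSegment ℝ p q ∩ segment ℝ r s).Subsingleton := h ▸ subsingleton_empty
  by_cases h₁ : StrictSide p q r s 1
  · have h₂ : ¬StrictSide p q r s (-1) := fun h₂ =>
      not_strictSide_and_neg hpq (Or.inl rfl) h ⟨h₁, h₂⟩
    rw [ordFn_eq_sign_mul_shadowLen hpq (Or.inl rfl) hZ h₂, one_mul]
  · rw [ordFn_eq_sign_mul_shadowLen hpq (Or.inr rfl) hZ (by rwa [neg_neg])]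
    ring

end Overlap

section Limit

variable {ι : Type*} {F : Filter ι} {pn qn rn sn zn : ι → Pt} {pl ql rl sl zl : Pt}

lemma tendsto_unitDir (hp : Tendsto pn F (𝓝 pl)) (hq : Tendsto qn F (𝓝 ql)) (hpq : pl ≠ ql) :
    Tendsto (fun x => unitDir (pn x) (qn x)) F (𝓝 (unitDir pl ql)) :=
  ((hq.sub hp).norm.inv₀ (norm_ne_zero_iff.2 (sub_ne_zero.2 hpq.symm))).smul (hq.sub hp)

lemma tendsto_unitNormal (hp : Tendsto pn F (𝓝 pl)) (hq : Tendsto qn F (𝓝 ql)) (hpq : pl ≠ ql) :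
    Tendsto (fun x => unitNormal (pn x) (qn x)) F (𝓝 (unitNormal pl ql)) := by
  have hrot : Continuous fun u : Pt => pt (-u 1) (u 0) := by unfold pt; fun_prop
  exact hrot.continuousAt.tendsto.comp (tendsto_unitDir hp hq hpq)

lemma tendsto_frameX (hp : Tendsto pn F (𝓝 pl)) (hq : Tendsto qn F (𝓝 ql)) (hpq : pl ≠ ql)
    (hz : Tendsto zn F (𝓝 zl)) :
    Tendsto (fun x => frameX (pn x) (qn x) (zn x)) F (𝓝 (frameX pl ql zl)) :=
  (tendsto_unitDir hp hq hpq).inner (hz.sub hp)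

lemma tendsto_frameY (hp : Tendsto pn F (𝓝 pl)) (hq : Tendsto qn F (𝓝 ql)) (hpq : pl ≠ ql)
    (hz : Tendsto zn F (𝓝 zl)) :
    Tendsto (fun x => frameY (pn x) (qn x) (zn x)) F (𝓝 (frameY pl ql zl)) :=
  (tendsto_unitNormal hp hq hpq).inner (hz.sub hp)

lemma tendsto_shadowLen (hp : Tendsto pn F (𝓝 pl)) (hq : Tendsto qn F (𝓝 ql))
    (hr : Tendsto rn F (𝓝 rl)) (hs : Tendsto sn F (𝓝 sl)) (hpq : pl ≠ ql) :
    Tendsto (fun x => shadowLen (frameX (pn x) (qn x) (rn x)) (frameX (pn x) (qn x) (sn x))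
      (dist (pn x) (qn x))) F (𝓝 (shadowLen (frameX pl ql rl) (frameX pl ql sl) (dist pl ql))) :=
  have ha := tendsto_frameX hp hq hpq hr
  have hb := tendsto_frameX hp hq hpq hs
  (((hp.dist hq).min (ha.max hb)).sub (tendsto_const_nhds.max (ha.min hb))).max tendsto_const_nhds

lemma StrictSide.eventually {σ : ℝ} (h : StrictSide pl ql rl sl σ) (hp : Tendsto pn F (𝓝 pl))
    (hq : Tendsto qn F (𝓝 ql)) (hr : Tendsto rn F (𝓝 rl)) (hs : Tendsto sn F (𝓝 sl))
    (hpq : pl ≠ ql) :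
    ∀ᶠ x in F, StrictSide (pn x) (qn x) (rn x) (sn x) σ := by
  obtain ⟨z, ⟨a, b, ha, hb, hab, rfl⟩, hX, hY⟩ := h
  have hz : Tendsto (fun x => a • rn x + b • sn x) F (𝓝 (a • rl + b • sl)) :=
    (hr.const_smul a).add (hs.const_smul b)
  have hXn := tendsto_frameX hp hq hpq hz
  have hYn := (tendsto_frameY hp hq hpq hz).const_mul σ
  filter_upwards [hXn.eventually (lt_mem_nhds hX.1),
    ((hp.dist hq).sub hXn).eventually (lt_mem_nhds (sub_pos.2 hX.2)),
    hYn.eventually (lt_mem_nhds hY)] with x h₁ h₂ h₃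
  exact ⟨_, ⟨a, b, ha, hb, hab, rfl⟩, ⟨h₁, sub_pos.1 h₂⟩, h₃⟩

lemma eventually_openSegment_inter_eq_empty (hp : Tendsto pn F (𝓝 pl))
    (hq : Tendsto qn F (𝓝 ql)) (hpq : pl ≠ ql)
    (htouch : ∀ᶠ x in F, ∀ z ∈ segment ℝ (pn x) (qn x) ∩ segment ℝ (rn x) (sn x),
      z = pn x ∨ z = qn x) :
    ∀ᶠ x in F, pn x ≠ qn x ∧ openSegment ℝ (pn x) (qn x) ∩ segment ℝ (rn x) (sn x) = ∅ := by
  filter_upwards [(hp.dist hq).eventually (lt_mem_nhds (dist_pos.2 hpq)), htouch] with x hx ht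
  have hne : pn x ≠ qn x := dist_pos.1 hx
  refine ⟨hne, eq_empty_of_forall_notMem fun z hz => ?_⟩
  rcases ht z ⟨openSegment_subset_segment ℝ _ _ hz.1, hz.2⟩ with rfl | rfl
  · exact hne (left_mem_openSegment_iff.1 hz.1)
  · exact hne (right_mem_openSegment_iff.1 hz.1)

lemma eq_ordFn_of_strictSide [F.NeBot] {A σ : ℝ} (hσ : σ = 1 ∨ σ = -1) (hp : Tendsto pn F (𝓝 pl))
    (hq : Tendsto qn F (𝓝 ql)) (hr : Tendsto rn F (𝓝 rl)) (hs : Tendsto sn F (𝓝 sl))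
    (hA : Tendsto (fun x => ordFn (pn x) (qn x) (rn x) (sn x)) F (𝓝 A)) (hpq : pl ≠ ql)
    (hZ : (openSegment ℝ pl ql ∩ segment ℝ rl sl).Subsingleton)
    (hempty : ∀ᶠ x in F,
      pn x ≠ qn x ∧ openSegment ℝ (pn x) (qn x) ∩ segment ℝ (rn x) (sn x) = ∅)
    (hside : StrictSide pl ql rl sl σ) :
    A = ordFn pl ql rl sl := by
  have hev := hside.eventually hp hq hr hs hpq
  have hopp : ¬StrictSide pl ql rl sl (-σ) := fun h => by
    obtain ⟨x, ⟨hne, hx⟩, h₁, h₂⟩ :=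
      (hempty.and (hev.and (h.eventually hp hq hr hs hpq))).exists
    exact not_strictSide_and_neg hne hσ hx ⟨h₁, h₂⟩
  rw [ordFn_eq_sign_mul_shadowLen hpq hσ hZ hopp]
  refine tendsto_nhds_unique hA (((tendsto_shadowLen hp hq hr hs hpq).const_mul σ).congr' ?_)
  filter_upwards [hempty, hev] with x ⟨hne, hx⟩ hσx
  exact (ordFn_eq_sign_mul_shadowLen hne hσ (hx ▸ subsingleton_empty)
    fun h => not_strictSide_and_neg hne hσ hx ⟨hσx, h⟩).symm

theorem wellAnnotated_of_tendsto [F.NeBot] {A : ℝ} (hp : Tendsto pn F (𝓝 pl))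
    (hq : Tendsto qn F (𝓝 ql)) (hr : Tendsto rn F (𝓝 rl)) (hs : Tendsto sn F (𝓝 sl))
    (hA : Tendsto (fun x => ordFn (pn x) (qn x) (rn x) (sn x)) F (𝓝 A))
    (htouch : ∀ᶠ x in F, ∀ z ∈ segment ℝ (pn x) (qn x) ∩ segment ℝ (rn x) (sn x),
      z = pn x ∨ z = qn x) :
    (∀ l : ℝ, 0 < l → OverlapLen (segment ℝ pl ql) (segment ℝ rl sl) l → A = l ∨ A = -l) ∧
    ((¬∃ l : ℝ, 0 < l ∧ OverlapLen (segment ℝ pl ql) (segment ℝ rl sl) l) →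
      A = ordFn pl ql rl sl) := by
  rcases eq_or_ne pl ql with rfl | hpq
  · have hA0 : A = 0 := tendsto_nhds_unique hA <| squeeze_zero_norm'
      (Eventually.of_forall fun x => abs_ordFn_le _ _ _ _) (by simpa using hp.dist hq)
    refine ⟨fun l hl ⟨u, v, huv, hl'⟩ => ?_, fun _ => by simp [hA0, ordFn, dplus, dminus]⟩
    rw [segment_same] at huv
    have hu : u ∈ ({pl} : Set Pt) ∩ segment ℝ rl sl := huv ▸ left_mem_segment ℝ u v
    have hv : v ∈ ({pl} : Set Pt) ∩ segment ℝ rl sl := huv ▸ right_mem_segment ℝ u v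
    rw [hu.1, hv.1, dist_self] at hl'
    exact absurd hl' hl.ne
  have hempty := eventually_openSegment_inter_eq_empty hp hq hpq htouch
  have hsq : A ^ 2 = shadowLen (frameX pl ql rl) (frameX pl ql sl) (dist pl ql) ^ 2 :=
    tendsto_nhds_unique (hA.pow 2) (((tendsto_shadowLen hp hq hr hs hpq).pow 2).congr' <|
      hempty.mono fun x ⟨hne, hx⟩ => (ordFn_sq_eq_shadowLen_sq hne hx).symm)
  refine ⟨fun l hl hov => ?_, fun hno => ?_⟩
  · rwa [shadowLen_eq_of_overlapLen hpq hl hov, sq_eq_sq_iff_eq_or_eq_neg] at hsq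
  have hZ := subsingleton_of_not_overlapLen hpq hno
  by_cases h₁ : StrictSide pl ql rl sl 1
  · exact eq_ordFn_of_strictSide (Or.inl rfl) hp hq hr hs hA hpq hZ hempty h₁
  by_cases h₂ : StrictSide pl ql rl sl (-1)
  · exact eq_ordFn_of_strictSide (Or.inr rfl) hp hq hr hs hA hpq hZ hempty h₂
  have e₁ := ordFn_eq_sign_mul_shadowLen hpq (Or.inl rfl) hZ h₂
  have e₂ := ordFn_eq_sign_mul_shadowLen hpq (Or.inr rfl) hZ (by rwa [neg_neg])
  have h0 : shadowLen (frameX pl ql rl) (frameX pl ql sl) (dist pl ql) = 0 := by linarith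
  rw [h0, sq_eq_sq_iff_eq_or_eq_neg, neg_zero, or_self] at hsq
  rw [hsq, e₁, h0, mul_zero]

end Limit

lemma Nontouching.eq_endpoint_of_mem_inter {L : Linkage V E} {C : V → Pt} (h : Nontouching L C)
    {i j : E} (hij : i ≠ j) {z : Pt} (hz : z ∈ Seg L C i ∩ Seg L C j) :
    z = C (L.fst i) ∨ z = C (L.snd i) := by
  obtain ⟨⟨u, hu, rfl⟩, -⟩ := h.2 i j hij z hz
  rcases hu with rfl | rfl
  exacts [Or.inl rfl, Or.inr rfl]

theorem igconf_well_annotated_general (L : Linkage V E)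
    (p : (V → Pt) × (E → E → ℝ)) (hp : p ∈ IGConf L) (i j : E) (hij : i ≠ j) :
    (∀ l : ℝ, 0 < l → OverlapLen (Seg L p.1 i) (Seg L p.1 j) l →
      p.2 i j = l ∨ p.2 i j = -l) ∧
    ((¬ ∃ l : ℝ, 0 < l ∧ OverlapLen (Seg L p.1 i) (Seg L p.1 j) l) →
      p.2 i j = ordFn (p.1 (L.fst i)) (p.1 (L.snd i)) (p.1 (L.fst j)) (p.1 (L.snd j))) := by
  set F := 𝓝[Annot L '' NConf L 1] p
  have : F.NeBot := mem_closure_iff_nhdsWithin_neBot.1 hp.2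
  have hcoord : ∀ v, Tendsto (fun x : (V → Pt) × (E → E → ℝ) => x.1 v) F (𝓝 (p.1 v)) :=
    fun v => ((continuous_apply v).comp continuous_fst).continuousWithinAt
  have hA : Tendsto (fun x : (V → Pt) × (E → E → ℝ) => x.2 i j) F (𝓝 (p.2 i j)) :=
    ((continuous_apply j).comp ((continuous_apply i).comp continuous_snd)).continuousWithinAt
  have hannot : ∀ᶠ x in F,
      x.2 i j = ordFn (x.1 (L.fst i)) (x.1 (L.snd i)) (x.1 (L.fst j)) (x.1 (L.snd j)) ∧
      ∀ z ∈ Seg L x.1 i ∩ Seg L x.1 j, z = x.1 (L.fst i) ∨ z = x.1 (L.snd i) := by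
    filter_upwards [self_mem_nhdsWithin] with x hx
    obtain ⟨C, hC, rfl⟩ := hx
    exact ⟨rfl, fun z hz => hC.2.eq_endpoint_of_mem_inter hij hz⟩
  exact wellAnnotated_of_tendsto (hcoord _) (hcoord _) (hcoord _) (hcoord _)
    (hA.congr' (hannot.mono fun x hx => hx.1)) (hannot.mono fun x hx => hx.2)

/-- For any linkage `L` and any `(C,A) ∈ IGConf₀(L)`, the annotation `A`
is well-annotated: for distinct edges `eᵢ` and `eⱼ`, if the segments `C(eᵢ)` and `C(eⱼ)`
overlap over a segment of length `l > 0` then `A i j = l` or `A i j = −l`, and if they do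
not overlap over a segment of positive length then `A i j = Ord(C(eᵢ), C(eⱼ))`. -/
theorem igconf_well_annotated [Fintype V] [Fintype E] (L : Linkage V E)
    (p : (V → Pt) × (E → E → ℝ)) (hp : p ∈ IGConf L) (i j : E) (hij : i ≠ j) :
    (∀ l : ℝ, 0 < l → OverlapLen (Seg L p.1 i) (Seg L p.1 j) l →
      p.2 i j = l ∨ p.2 i j = -l) ∧
    ((¬ ∃ l : ℝ, 0 < l ∧ OverlapLen (Seg L p.1 i) (Seg L p.1 j) l) →
      p.2 i j = ordFn (p.1 (L.fst i)) (p.1 (L.snd i)) (p.1 (L.fst j)) (p.1 (L.snd j))) :=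
  igconf_well_annotated_general L p hp i j hij
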